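/- arXiv:2106.05938 — 2 statements merged into one kernel-verified Lean document; each statement's English description precedes it below -/
import Mathlib

section
/- Let d, L, K be positive integers. For each k ∈ {1,…,K} and l ∈ {1,…,L}, let Φ_{l,k} be a generalised quantum operation on d×d complex matrices and let α̃_k ∈ ℂ. Define the operator X = Σ_{k=1}^{K} α̃_k ⊗_{l=1}^{L} (Φ_{l,k} ⊗ id)(φ) acting on ⊗_{l=1}^{L}(ℂ^d ⊗ ℂ^d), where each Φ_{l,k} acts on the l-th primary factor and id acts on its copy, and φ is the maximally entangled state on ℂ^d ⊗ ℂ^d. Then Σ_{k=1}^{K} |α̃_k| ≥ max_{1≤l≤L} ‖R_l(X)‖₁, where R_l(X) is the l-th realignment of X and ‖·‖₁ is the trace norm. -/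
/-!
Splitting off the `l`-th factor writes `R_l(X)` as a sum `Σ_k α̃_k a_k b_kᵀ` of rank-one
matrices, where `a_k` lists the entries of `(Φ_{l,k} ⊗ id)(φ)` and `b_k` those of the tensor
product of the remaining factors. Each `(Φ ⊗ id)(φ)` has Hilbert–Schmidt norm at most one: its
entries are `d⁻¹ Σ_k (U(e_a ⊗ e))_{ik} conj((V(e_b ⊗ e))_{jk})`, so Cauchy–Schwarz and unitarity of
`U` and `V` bound the squared norm by `d⁻² · d · d`. Hilbert–Schmidt norms multiply under tensor
products, so `‖a_k‖₂, ‖b_k‖₂ ≤ 1`.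

For the trace norm, diagonalise `M Mᴴ = Σ λ_i u_i u_iᴴ` and put `v_i = Mᴴ u_i / √λ_i`. Then
`‖M‖₁ = Σ_i ⟨u_i, M v_i⟩`, which is linear in `M`, and both `(u_i)` and `(v_i)` satisfy Bessel's
inequality, so by Cauchy–Schwarz the rank-one term `a bᵀ` contributes at most `‖a‖₂ ‖b‖₂`.
-/

open Matrix
open scoped Kronecker ComplexOrder

/-- Partial trace over the second (ancilla) tensor factor. -/
noncomputable def ptraceE {ι κ : Type*} [Fintype κ] (X : Matrix (ι × κ) (ι × κ) ℂ) : Matrix ι ι ℂ :=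
  Matrix.of fun i j => ∑ k, X (i, k) (j, k)

/-- A generalised quantum operation `Φ(ρ) = Tr_E[U (ρ ⊗ |e⟩⟨e|) V†]`. -/
def IsGQO {ι : Type*} [Fintype ι] [DecidableEq ι]
    (Φ : Matrix ι ι ℂ → Matrix ι ι ℂ) : Prop :=
  ∃ (dE : ℕ) (e : Fin dE → ℂ) (U V : Matrix (ι × Fin dE) (ι × Fin dE) ℂ),
    star e ⬝ᵥ e = 1 ∧
    U ∈ Matrix.unitaryGroup (ι × Fin dE) ℂ ∧
    V ∈ Matrix.unitaryGroup (ι × Fin dE) ℂ ∧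
    ∀ ρ, Φ ρ = ptraceE (U * (ρ ⊗ₖ Matrix.vecMulVec e (star e)) * Vᴴ)

/-- The square root of a positive semidefinite matrix, as `Matrix.PosSemidef.sqrt` was defined
in the older Mathlib. -/
noncomputable def Matrix.PosSemidef.sqrt {n : Type*} [Fintype n] [DecidableEq n]
    {A : Matrix n n ℂ} (hA : A.PosSemidef) : Matrix n n ℂ :=
  hA.1.eigenvectorUnitary.1 * diagonal ((↑) ∘ (Real.sqrt) ∘ hA.1.eigenvalues) *
    (star hA.1.eigenvectorUnitary : Matrix n n ℂ)

/-- The trace norm `‖M‖₁ = Tr √(M Mᴴ)`. -/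
noncomputable def traceNorm {m n : Type*} [Fintype m] [Fintype n] [DecidableEq m]
    (M : Matrix m n ℂ) : ℝ :=
  ((Matrix.posSemidef_self_mul_conjTranspose M).sqrt.trace).re

/-- `(Φ ⊗ id)` applied to the maximally entangled state. -/
noncomputable def choiHalf {ι : Type*} [Fintype ι] [DecidableEq ι]
    (Φ : Matrix ι ι ℂ → Matrix ι ι ℂ) : Matrix (ι × ι) (ι × ι) ℂ :=
  Matrix.of fun p q =>
    ((Fintype.card ι : ℂ))⁻¹ * Φ (Matrix.single p.2 q.2 1) p.1 q.1

/-- The `l`-th realignment of an operator on `⊗_{m} (ℂ^d ⊗ ℂ^d)`. -/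
def realign {ι : Type*} {L : ℕ} (X : Matrix (Fin L → ι × ι) (Fin L → ι × ι) ℂ) (l : Fin L) :
    Matrix ((ι × ι) × (ι × ι)) ({ m : Fin L // m ≠ l } → (ι × ι) × (ι × ι)) ℂ :=
  Matrix.of fun r g =>
    X (fun m => if h : m = l then r.1 else (g ⟨m, h⟩).1)
      (fun m => if h : m = l then r.2 else (g ⟨m, h⟩).2)

lemma ofReal_sum_norm_sq {n : Type*} [Fintype n] (x : n → ℂ) :
    ((∑ i, ‖x i‖ ^ 2 : ℝ) : ℂ) = star x ⬝ᵥ x := by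
  simp only [Complex.ofReal_sum, Complex.ofReal_pow, dotProduct, Pi.star_apply, RCLike.star_def,
    Complex.conj_mul']

lemma sum_norm_sq_mulVec_of_mem_unitaryGroup {n : Type*} [Fintype n] [DecidableEq n]
    {U : Matrix n n ℂ} (hU : U ∈ unitaryGroup n ℂ) (x : n → ℂ) :
    ∑ i, ‖(U *ᵥ x) i‖ ^ 2 = ∑ i, ‖x i‖ ^ 2 := by
  have hUU : Uᴴ * U = 1 := mem_unitaryGroup_iff'.mp hU
  apply Complex.ofReal_injective
  rw [ofReal_sum_norm_sq, ofReal_sum_norm_sq, star_mulVec, ← dotProduct_mulVec, mulVec_mulVec,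
    hUU, one_mulVec]

lemma ptraceE_vecMulVec {ι κ : Type*} [Fintype κ] (x y : ι × κ → ℂ) (i j : ι) :
    ptraceE (vecMulVec x y) i j = ∑ k, x (i, k) * y (j, k) := by
  simp [ptraceE, vecMulVec_apply]

def singleTensor {ι κ : Type*} [DecidableEq ι] (a : ι) (e : κ → ℂ) : ι × κ → ℂ :=
  fun p => if p.1 = a then e p.2 else 0

lemma single_kronecker_vecMulVec {ι κ : Type*} [DecidableEq ι] (e : κ → ℂ) (a b : ι) :
    single a b 1 ⊗ₖ vecMulVec e (star e) =
      vecMulVec (singleTensor a e) (star (singleTensor b e)) := by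
  ext ⟨i, s⟩ ⟨j, t⟩
  simp only [kroneckerMap_apply, vecMulVec_apply, single_apply, singleTensor, Pi.star_apply]
  split_ifs <;> simp_all

lemma sum_norm_sq_singleTensor {ι κ : Type*} [Fintype ι] [Fintype κ] [DecidableEq ι] (a : ι)
    (e : κ → ℂ) : ∑ p, ‖singleTensor a e p‖ ^ 2 = ∑ s, ‖e s‖ ^ 2 := by
  simp [singleTensor, Fintype.sum_prod_type, apply_ite]

lemma norm_dotProduct_le {n : Type*} [Fintype n] (x y : n → ℂ) :
    ‖x ⬝ᵥ y‖ ≤ √(∑ i, ‖x i‖ ^ 2) * √(∑ i, ‖y i‖ ^ 2) :=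
  calc ‖x ⬝ᵥ y‖ ≤ ∑ i, ‖x i‖ * ‖y i‖ := by
        simpa only [dotProduct, norm_mul] using norm_sum_le Finset.univ fun i => x i * y i
    _ ≤ _ := Real.sum_mul_le_sqrt_mul_sqrt _ _ _

lemma norm_dotProduct_star_sq_le {n : Type*} [Fintype n] (x y : n → ℂ) :
    ‖x ⬝ᵥ star y‖ ^ 2 ≤ (∑ i, ‖x i‖ ^ 2) * ∑ i, ‖y i‖ ^ 2 := by
  have h := pow_le_pow_left₀ (norm_nonneg _) (norm_dotProduct_le x (star y)) 2
  simpa only [mul_pow, Real.sq_sqrt (Finset.sum_nonneg fun _ _ => sq_nonneg _), Pi.star_apply,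
    norm_star] using h

lemma choiHalf_apply_of_eq_ptraceE {ι κ : Type*} [Fintype ι] [DecidableEq ι] [Fintype κ]
    {Φ : Matrix ι ι ℂ → Matrix ι ι ℂ} {e : κ → ℂ} {U V : Matrix (ι × κ) (ι × κ) ℂ}
    (hΦ : ∀ ρ, Φ ρ = ptraceE (U * (ρ ⊗ₖ vecMulVec e (star e)) * Vᴴ)) (i a j b : ι) :
    choiHalf Φ (i, a) (j, b) = (Fintype.card ι : ℂ)⁻¹ *
      (fun k => (U *ᵥ singleTensor a e) (i, k)) ⬝ᵥ
        star fun k => (V *ᵥ singleTensor b e) (j, k) := by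
  rw [choiHalf, of_apply, hΦ, single_kronecker_vecMulVec, mul_vecMulVec, vecMulVec_mul,
    ← conjTranspose_conjTranspose V, ← star_mulVec, conjTranspose_conjTranspose,
    ptraceE_vecMulVec]
  rfl

theorem IsGQO.sum_norm_sq_choiHalf_le_one {ι : Type*} [Fintype ι] [DecidableEq ι]
    {Φ : Matrix ι ι ℂ → Matrix ι ι ℂ} (hΦ : IsGQO Φ) :
    ∑ r : (ι × ι) × (ι × ι), ‖choiHalf Φ r.1 r.2‖ ^ 2 ≤ 1 := by
  obtain ⟨dE, e, U, V, he, hU, hV, hΦ⟩ := hΦ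
  have he_norm : ∑ s, ‖e s‖ ^ 2 = 1 :=
    Complex.ofReal_injective (by rw [ofReal_sum_norm_sq, he]; simp)
  have hmass : ∀ W ∈ unitaryGroup (ι × Fin dE) ℂ,
      ∑ p : ι × ι, ∑ k, ‖(W *ᵥ singleTensor p.2 e) (p.1, k)‖ ^ 2 = Fintype.card ι := by
    intro W hW
    calc ∑ p : ι × ι, ∑ k, ‖(W *ᵥ singleTensor p.2 e) (p.1, k)‖ ^ 2
        = ∑ a, ∑ q, ‖(W *ᵥ singleTensor a e) q‖ ^ 2 := by
          rw [Fintype.sum_prod_type_right]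
          simp only [Fintype.sum_prod_type]
      _ = Fintype.card ι := by
          simp [sum_norm_sq_mulVec_of_mem_unitaryGroup hW, sum_norm_sq_singleTensor, he_norm]
  calc ∑ r : (ι × ι) × (ι × ι), ‖choiHalf Φ r.1 r.2‖ ^ 2
      ≤ ∑ p : ι × ι, ∑ q : ι × ι, (Fintype.card ι : ℝ)⁻¹ ^ 2 *
          ((∑ k, ‖(U *ᵥ singleTensor p.2 e) (p.1, k)‖ ^ 2) *
            ∑ k, ‖(V *ᵥ singleTensor q.2 e) (q.1, k)‖ ^ 2) := by
        rw [Fintype.sum_prod_type]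
        gcongr with p _ q _
        rw [choiHalf_apply_of_eq_ptraceE hΦ, norm_mul, mul_pow, norm_inv, Complex.norm_natCast]
        gcongr
        exact norm_dotProduct_star_sq_le _ _
    _ = (Fintype.card ι : ℝ)⁻¹ ^ 2 *
          ((∑ p : ι × ι, ∑ k, ‖(U *ᵥ singleTensor p.2 e) (p.1, k)‖ ^ 2) *
            ∑ q : ι × ι, ∑ k, ‖(V *ᵥ singleTensor q.2 e) (q.1, k)‖ ^ 2) := by
        simp_rw [Finset.sum_mul_sum, Finset.mul_sum]
    _ = (Fintype.card ι : ℝ)⁻¹ ^ 2 * (Fintype.card ι * Fintype.card ι) := by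
        rw [hmass U hU, hmass V hV]
    _ ≤ 1 := by
        rcases eq_or_ne (Fintype.card ι : ℝ) 0 with h | h
        · simp [h]
        · rw [inv_pow, ← sq, inv_mul_cancel₀ (pow_ne_zero 2 h)]

def IsBesselFamily {ι n : Type*} [Fintype ι] [Fintype n] (v : ι → n → ℂ) : Prop :=
  ∀ x : n → ℂ, ∑ i, ‖star (v i) ⬝ᵥ x‖ ^ 2 ≤ ∑ j, ‖x j‖ ^ 2

lemma isBesselFamily_of_orthonormal {ι n : Type*} [Fintype ι] [Fintype n]
    {v : ι → EuclideanSpace ℂ n} (hv : Orthonormal ℂ fun i : {i // v i ≠ 0} => v i) :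
    IsBesselFamily fun i => (v i).ofLp := by
  intro x
  have hinner : ∀ i, star (v i).ofLp ⬝ᵥ x = inner ℂ (v i) (WithLp.toLp 2 x) := fun i => by
    rw [EuclideanSpace.inner_eq_star_dotProduct, dotProduct_comm]
  calc ∑ i, ‖star (v i).ofLp ⬝ᵥ x‖ ^ 2
      = ∑ i : {i // v i ≠ 0}, ‖inner ℂ (v i) (WithLp.toLp 2 x)‖ ^ 2 := by
        have hzero : ∑ i : {i // ¬v i ≠ 0}, ‖star (v i).ofLp ⬝ᵥ x‖ ^ 2 = 0 :=
          Finset.sum_eq_zero fun i _ => by simp [not_not.mp i.2]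
        rw [← Fintype.sum_subtype_add_sum_subtype (fun i => v i ≠ 0), hzero, add_zero]
        simp only [hinner]
    _ ≤ ‖WithLp.toLp 2 x‖ ^ 2 := hv.sum_inner_products_le _
    _ = ∑ j, ‖x j‖ ^ 2 := EuclideanSpace.norm_sq_eq _

lemma traceNorm_eq_sum_sqrt_eigenvalues {m n : Type*} [Fintype m] [Fintype n] [DecidableEq m]
    (M : Matrix m n ℂ) :
    traceNorm M = ∑ i, √((posSemidef_self_mul_conjTranspose M).1.eigenvalues i) := by
  rw [traceNorm, PosSemidef.sqrt, trace_mul_cycle, Unitary.coe_star_mul_self, one_mul,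
    trace_diagonal]
  simp

lemma star_dotProduct_mulVec {m n : Type*} [Fintype m] [Fintype n] (M : Matrix m n ℂ)
    (x : m → ℂ) (y : n → ℂ) : star x ⬝ᵥ (M *ᵥ y) = star (Mᴴ *ᵥ x) ⬝ᵥ y := by
  rw [star_mulVec, conjTranspose_conjTranspose, dotProduct_mulVec]

lemma star_conjTranspose_mulVec_dotProduct_of_eigenvectors {m n : Type*} [Fintype m] [Fintype n]
    [DecidableEq m] (M : Matrix m n ℂ) (u : OrthonormalBasis m ℂ (EuclideanSpace ℂ m))
    (lam : m → ℝ) (heig : ∀ j, (M * Mᴴ) *ᵥ u j = (lam j : ℂ) • u j) (i j : m) :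
    star (Mᴴ *ᵥ u i) ⬝ᵥ (Mᴴ *ᵥ u j) = if i = j then (lam j : ℂ) else 0 := by
  have hu : star (u i).ofLp ⬝ᵥ (u j).ofLp = if i = j then 1 else 0 := by
    rw [dotProduct_comm, ← EuclideanSpace.inner_eq_star_dotProduct]
    exact orthonormal_iff_ite.mp u.orthonormal i j
  rw [← star_dotProduct_mulVec, mulVec_mulVec, heig, dotProduct_smul, hu]
  split_ifs <;> simp

theorem exists_isBesselFamily_traceNorm_eq {m n : Type*} [Fintype m] [Fintype n] [DecidableEq m]
    (M : Matrix m n ℂ) :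
    ∃ (u : m → m → ℂ) (v : m → n → ℂ), IsBesselFamily u ∧ IsBesselFamily v ∧
      (traceNorm M : ℂ) = ∑ i, star (u i) ⬝ᵥ (M *ᵥ v i) := by
  have hMM := posSemidef_self_mul_conjTranspose M
  have htr := traceNorm_eq_sum_sqrt_eigenvalues M
  have hnonneg := hMM.eigenvalues_nonneg
  have heig : ∀ j, (M * Mᴴ) *ᵥ hMM.1.eigenvectorBasis j =
      (hMM.1.eigenvalues j : ℂ) • hMM.1.eigenvectorBasis j := fun j => by
    rw [hMM.1.mulVec_eigenvectorBasis]; rfl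
  generalize hMM.1.eigenvalues = lam at htr hnonneg heig
  generalize hMM.1.eigenvectorBasis = u at heig
  have hgram := star_conjTranspose_mulVec_dotProduct_of_eigenvectors M u lam heig
  have hsq : ∀ i, (lam i : ℂ) = √(lam i) * √(lam i) := fun i => by
    exact_mod_cast (Real.mul_self_sqrt (hnonneg i)).symm
  -- `v i = 0` when `λ_i = 0`, because `(√0)⁻¹ = 0`
  set v : m → EuclideanSpace ℂ n := fun i => WithLp.toLp 2 (((√(lam i))⁻¹ : ℂ) • (Mᴴ *ᵥ u i))
  refine ⟨fun i => u i, fun i => (v i).ofLp,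
    isBesselFamily_of_orthonormal (u.orthonormal.comp _ Subtype.val_injective),
    isBesselFamily_of_orthonormal ?_, ?_⟩
  · rw [orthonormal_iff_ite]
    rintro ⟨i, hi⟩ ⟨j, -⟩
    have hpos : 0 < lam i := (hnonneg i).lt_of_ne' fun h => hi (by simp [v, h])
    rw [EuclideanSpace.inner_eq_star_dotProduct, dotProduct_comm]
    simp only [v, star_smul, smul_dotProduct, dotProduct_smul, hgram, Subtype.mk.injEq]
    split_ifs with h
    · subst h
      have hσ : (√(lam i) : ℂ) ≠ 0 := by exact_mod_cast (Real.sqrt_pos.mpr hpos).ne'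
      simp only [RCLike.star_def, map_inv₀, Complex.conj_ofReal, smul_eq_mul, hsq]
      field_simp
    · simp
  · rw [htr, Complex.ofReal_sum]
    refine Finset.sum_congr rfl fun i _ => ?_
    rw [mulVec_smul, dotProduct_smul, star_dotProduct_mulVec, hgram, if_pos rfl, smul_eq_mul,
      hsq]
    rcases eq_or_ne (√(lam i) : ℂ) 0 with h | h
    · simp [h]
    · field_simp

lemma dotProduct_vecMulVec_mulVec {m n R : Type*} [Fintype m] [Fintype n] [CommSemiring R]
    (z x : m → R) (y w : n → R) : z ⬝ᵥ (vecMulVec x y *ᵥ w) = (z ⬝ᵥ x) * (y ⬝ᵥ w) := by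
  simp [vecMulVec_mulVec, dotProduct_smul, mul_comm]

lemma IsBesselFamily.norm_sum_mul_le {ι m n : Type*} [Fintype ι] [Fintype m] [Fintype n]
    {u : ι → m → ℂ} {v : ι → n → ℂ} (hu : IsBesselFamily u) (hv : IsBesselFamily v)
    (x : m → ℂ) (y : n → ℂ) :
    ‖∑ i, (star (u i) ⬝ᵥ x) * (y ⬝ᵥ v i)‖ ≤ √(∑ j, ‖x j‖ ^ 2) * √(∑ j, ‖y j‖ ^ 2) := by
  have hv_star : ∑ i, ‖y ⬝ᵥ v i‖ ^ 2 ≤ ∑ j, ‖y j‖ ^ 2 := by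
    simpa only [star_dotProduct_star, norm_star, Pi.star_apply] using hv (star y)
  calc ‖∑ i, (star (u i) ⬝ᵥ x) * (y ⬝ᵥ v i)‖
      ≤ √(∑ i, ‖star (u i) ⬝ᵥ x‖ ^ 2) * √(∑ i, ‖y ⬝ᵥ v i‖ ^ 2) :=
        norm_dotProduct_le (fun i => star (u i) ⬝ᵥ x) fun i => y ⬝ᵥ v i
    _ ≤ _ := mul_le_mul (Real.sqrt_le_sqrt (hu x)) (Real.sqrt_le_sqrt hv_star)
        (Real.sqrt_nonneg _) (Real.sqrt_nonneg _)

theorem traceNorm_sum_smul_vecMulVec_le {K m n : Type*} [Fintype K] [Fintype m] [Fintype n]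
    [DecidableEq m] (α : K → ℂ) (a : K → m → ℂ) (b : K → n → ℂ) :
    traceNorm (∑ k, α k • vecMulVec (a k) (b k)) ≤
      ∑ k, ‖α k‖ * (√(∑ i, ‖a k i‖ ^ 2) * √(∑ j, ‖b k j‖ ^ 2)) := by
  obtain ⟨u, v, hu, hv, htr⟩ :=
    exists_isBesselFamily_traceNorm_eq (∑ k, α k • vecMulVec (a k) (b k))
  have hexpand : (traceNorm (∑ k, α k • vecMulVec (a k) (b k)) : ℂ) =
      ∑ k, α k * ∑ i, (star (u i) ⬝ᵥ a k) * (b k ⬝ᵥ v i) := by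
    simp only [htr, sum_mulVec, dotProduct_sum, smul_mulVec, dotProduct_smul, smul_eq_mul,
      dotProduct_vecMulVec_mulVec, Finset.mul_sum]
    exact Finset.sum_comm
  calc traceNorm (∑ k, α k • vecMulVec (a k) (b k))
      ≤ ‖∑ k, α k * ∑ i, (star (u i) ⬝ᵥ a k) * (b k ⬝ᵥ v i)‖ := by
        rw [← hexpand, Complex.norm_real, Real.norm_eq_abs]
        exact le_abs_self _
    _ ≤ _ := by
        refine (norm_sum_le _ _).trans (Finset.sum_le_sum fun k _ => ?_)
        rw [norm_mul]
        gcongr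
        exact hu.norm_sum_mul_le hv _ _

lemma sum_norm_sq_prod {κ β : Type*} [Fintype κ] [DecidableEq κ] [Fintype β] (f : κ → β → ℂ) :
    ∑ g : κ → β, ‖∏ m, f m (g m)‖ ^ 2 = ∏ m, ∑ x, ‖f m x‖ ^ 2 := by
  simp only [norm_prod, ← Finset.prod_pow]
  exact (Fintype.prod_sum fun m x => ‖f m x‖ ^ 2).symm

lemma realign_of_sum_prod {ι K : Type*} [Fintype K] {L : ℕ} (α : K → ℂ)
    (C : Fin L → K → Matrix (ι × ι) (ι × ι) ℂ) (l : Fin L) :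
    realign (Matrix.of fun p q => ∑ k, α k * ∏ m, C m k (p m) (q m)) l =
      ∑ k, α k • vecMulVec (fun r => C l k r.1 r.2)
        (fun g => ∏ m : {m // m ≠ l}, C m k (g m).1 (g m).2) := by
  ext r g
  simp only [realign, of_apply, Matrix.sum_apply, Matrix.smul_apply, vecMulVec_apply, smul_eq_mul,
    Fintype.prod_eq_mul_prod_subtype_ne _ l]
  refine Finset.sum_congr rfl fun k _ => ?_
  simp only [dif_pos, Subtype.coe_eta]
  congr 2
  exact Finset.prod_congr rfl fun m _ => by simp only [dif_neg m.2]

theorem stmt0_general (d L K : ℕ)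
    (Φ : Fin L → Fin K → (Matrix (Fin d) (Fin d) ℂ → Matrix (Fin d) (Fin d) ℂ))
    (hΦ : ∀ l k, IsGQO (Φ l k)) (α : Fin K → ℂ)
    (X : Matrix (Fin L → Fin d × Fin d) (Fin L → Fin d × Fin d) ℂ)
    (hX : X = Matrix.of fun p q => ∑ k, α k * ∏ l, choiHalf (Φ l k) (p l) (q l)) :
    ∀ l : Fin L, traceNorm (realign X l) ≤ ∑ k, ‖α k‖ := by
  intro l
  rw [hX, realign_of_sum_prod]
  refine (traceNorm_sum_smul_vecMulVec_le _ _ _).trans (Finset.sum_le_sum fun k _ => ?_)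
  have hrest : ∑ g : {m // m ≠ l} → (Fin d × Fin d) × (Fin d × Fin d),
      ‖∏ m : {m // m ≠ l}, choiHalf (Φ m k) (g m).1 (g m).2‖ ^ 2 ≤ 1 := by
    rw [sum_norm_sq_prod fun (m : {m // m ≠ l}) (r : (Fin d × Fin d) × (Fin d × Fin d)) =>
      choiHalf (Φ m k) r.1 r.2]
    exact Finset.prod_le_one (fun _ _ => by positivity)
      fun m _ => (hΦ m k).sum_norm_sq_choiHalf_le_one
  exact mul_le_of_le_one_right (norm_nonneg _) <| mul_le_one₀
    (Real.sqrt_le_one.mpr (hΦ l k).sum_norm_sq_choiHalf_le_one) (Real.sqrt_nonneg _)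
    (Real.sqrt_le_one.mpr hrest)

theorem stmt0 (d L K : ℕ) (hd : 0 < d) (hL : 0 < L) (hK : 0 < K)
    (Φ : Fin L → Fin K → (Matrix (Fin d) (Fin d) ℂ → Matrix (Fin d) (Fin d) ℂ))
    (hΦ : ∀ l k, IsGQO (Φ l k)) (α : Fin K → ℂ)
    (X : Matrix (Fin L → Fin d × Fin d) (Fin L → Fin d × Fin d) ℂ)
    (hX : X = Matrix.of fun p q => ∑ k, α k * ∏ l, choiHalf (Φ l k) (p l) (q l)) :
    ∀ l : Fin L, traceNorm (realign X l) ≤ ∑ k, ‖α k‖ :=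
  stmt0_general d L K Φ hΦ α X hX
end

section
/- Let A and B be Hermitian n×n complex matrices and T ≥ 0. With B_I(t) = e^{iAt} B e^{−iAt}, D_0 = I, and D_m = ∫_{0 ≤ t_m ≤ ⋯ ≤ t_1 ≤ T} B_I(t_1) B_I(t_2) ⋯ B_I(t_m) dt_1 ⋯ dt_m for m ≥ 1, one has ‖D_m‖ ≤ (‖B‖T)^m / m! for all m ≥ 0, the series Σ_{m=0}^{∞} (−i)^m D_m converges absolutely in operator norm, and the Dyson series identity holds: e^{iAT} e^{−i(A+B)T} = Σ_{m=0}^{∞} (−i)^m D_m. -/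
/-!
Peeling off the outermost time `t_1` (Fubini) shows `D_m(T) = (K^m 1)(T)` for the Volterra
operator `(K f)(t) = ∫_0^t B_I(s) f(s) ds`. Since `B_I(t)` is `B` conjugated by a unitary,
`‖B_I(t)‖ = ‖B‖`, and induction gives `‖(K^k f)(t)‖ ≤ C (‖B‖ t)^k / k!` whenever `‖f‖ ≤ C` on
`[0, t]`. The propagator `U(t) = e^{iAt} e^{-i(A+B)t}` satisfies `U' = -i B_I U`, i.e.
`U = 1 - i K U`; iterating, `U = ∑_{m<k} (-i)^m K^m 1 + (-i)^k K^k U`, and the remainder tends to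
zero by the same factorial bound.
-/

open Matrix MeasureTheory
open scoped Matrix.Norms.L2Operator

/-- The interaction-picture operator `B_I(t) = e^{iAt} B e^{−iAt}`. -/
noncomputable def interactionPicture {n : ℕ} (A B : Matrix (Fin n) (Fin n) ℂ) (t : ℝ) :
    Matrix (Fin n) (Fin n) ℂ :=
  NormedSpace.exp ((Complex.I * (t : ℂ)) • A) * B *
    NormedSpace.exp ((-(Complex.I * (t : ℂ))) • A)

/-- The ordered simplex `{(t_1, …, t_m) : 0 ≤ t_m ≤ ⋯ ≤ t_1 ≤ T}`. -/
def orderedSimplex (m : ℕ) (T : ℝ) : Set (Fin m → ℝ) :=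
  {t | (∀ i, t i ∈ Set.Icc 0 T) ∧ ∀ i j : Fin m, i ≤ j → t j ≤ t i}

/-- The `m`-th Dyson term
`D_m = ∫_{0 ≤ t_m ≤ ⋯ ≤ t_1 ≤ T} B_I(t_1) ⋯ B_I(t_m) dt_1 ⋯ dt_m` (with `D_0 = I`). -/
noncomputable def dysonTerm {n : ℕ} (A B : Matrix (Fin n) (Fin n) ℂ) (T : ℝ) (m : ℕ) :
    Matrix (Fin n) (Fin n) ℂ :=
  ∫ t in orderedSimplex m T,
    (List.ofFn fun i : Fin m => interactionPicture A B (t i)).prod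

theorem isCompact_orderedSimplex (m : ℕ) (T : ℝ) : IsCompact (orderedSimplex m T) := by
  refine (isCompact_univ_pi fun _ => isCompact_Icc (a := (0 : ℝ)) (b := T)).of_isClosed_subset
    ?_ fun t ht i _ => ht.1 i
  simp only [orderedSimplex, Set.ofPred_and, Set.ofPred_forall]
  refine (isClosed_iInter fun i => isClosed_Icc.preimage (continuous_apply i)).inter
    (isClosed_iInter fun i => isClosed_iInter fun j => isClosed_iInter fun _ =>
      isClosed_le (continuous_apply j) (continuous_apply i))

theorem cons_mem_orderedSimplex_iff {m : ℕ} {T s : ℝ} {u : Fin m → ℝ} :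
    Fin.cons s u ∈ orderedSimplex (m + 1) T ↔ s ∈ Set.Icc 0 T ∧ u ∈ orderedSimplex m s := by
  simp only [orderedSimplex, Set.mem_ofPred_eq, Fin.forall_fin_succ, Fin.cons_zero,
    Fin.cons_succ, Fin.succ_le_succ_iff, Fin.zero_le, le_refl, imp_true_iff,
    Set.mem_Icc]
  constructor
  · rintro ⟨⟨hs, hu₀⟩, ⟨-, hus⟩, hu⟩
    exact ⟨hs, fun i => ⟨(hu₀ i).1, hus i trivial⟩, fun i j => (hu i).2 j⟩
  · rintro ⟨hs, hus, hu⟩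
    exact ⟨⟨hs, fun i => ⟨(hus i).1, (hus i).2.trans hs.2⟩⟩, ⟨trivial, fun i _ => (hus i).2⟩,
      fun i => ⟨fun h => absurd h (by simp), hu i⟩⟩

theorem indicator_orderedSimplex_cons {β : Type*} [Zero β] {m : ℕ} {T : ℝ}
    (F : (Fin (m + 1) → ℝ) → β) (s : ℝ) (u : Fin m → ℝ) :
    (orderedSimplex (m + 1) T).indicator F (Fin.cons s u) =
      (Set.Icc 0 T).indicator
        (fun s => (orderedSimplex m s).indicator (fun u => F (Fin.cons s u)) u) s := by
  by_cases hs : s ∈ Set.Icc 0 T <;> by_cases hu : u ∈ orderedSimplex m s <;>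
    simp [Set.indicator_of_mem, Set.indicator_of_notMem, cons_mem_orderedSimplex_iff, hs, hu]

theorem setIntegral_orderedSimplex_succ {E : Type*} [NormedAddCommGroup E] [NormedSpace ℝ E]
    {m : ℕ} {T : ℝ} {F : (Fin (m + 1) → ℝ) → E}
    (hF : IntegrableOn F (orderedSimplex (m + 1) T)) :
    ∫ t in orderedSimplex (m + 1) T, F t =
      ∫ s in Set.Icc 0 T, ∫ u in orderedSimplex m s, F (Fin.cons s u) := by
  have hS : MeasurableSet (orderedSimplex (m + 1) T) :=
    (isCompact_orderedSimplex _ _).isClosed.measurableSet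
  have hcons := (volume_preserving_piFinSuccAbove (fun _ : Fin (m + 1) => ℝ) 0).symm
  have hcons_apply : ∀ p : ℝ × (Fin m → ℝ),
      (MeasurableEquiv.piFinSuccAbove (fun _ : Fin (m + 1) => ℝ) 0).symm p = Fin.cons p.1 p.2 :=
    fun p => by simp [Fin.insertNthEquiv, Fin.insertNth_zero']
  have hint : Integrable fun p : ℝ × (Fin m → ℝ) =>
      (orderedSimplex (m + 1) T).indicator F (Fin.cons p.1 p.2) := by
    simpa only [Function.comp_def, hcons_apply] using
      (hcons.integrable_comp_emb (MeasurableEquiv.measurableEmbedding _)).2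
        ((integrable_indicator_iff hS).2 hF)
  rw [← integral_indicator hS, ← hcons.integral_comp', ← integral_indicator measurableSet_Icc]
  simp only [hcons_apply]
  rw [Measure.volume_eq_prod, integral_prod _ hint]
  refine integral_congr_ae (.of_forall fun s => ?_)
  by_cases hs : s ∈ Set.Icc 0 T
  · simp [indicator_orderedSimplex_cons, hs,
      integral_indicator (isCompact_orderedSimplex _ _).isClosed.measurableSet]
  · simp [indicator_orderedSimplex_cons, hs]

theorem continuous_prod_ofFn {α M : Type*} [TopologicalSpace α] [Monoid M] [TopologicalSpace M]
    [ContinuousMul M] {f : α → M} (hf : Continuous f) (m : ℕ) :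
    Continuous fun t : Fin m → α => (List.ofFn fun i => f (t i)).prod := by
  simp only [List.ofFn_eq_map]
  exact continuous_list_prod _ fun i _ => hf.comp (continuous_apply i)

section OrderedSimplexIntegral

variable {M : Type*} [NormedRing M] [NormedSpace ℝ M]

/-- `dysonTerm A B T m` is `orderedSimplexIntegral (interactionPicture A B) m T` by definition. -/
noncomputable def orderedSimplexIntegral (f : ℝ → M) (m : ℕ) (T : ℝ) : M :=
  ∫ t in orderedSimplex m T, (List.ofFn fun i => f (t i)).prod

theorem orderedSimplexIntegral_zero [CompleteSpace M] (f : ℝ → M) (T : ℝ) :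
    orderedSimplexIntegral f 0 T = 1 := by
  have : orderedSimplex 0 T = Set.univ :=
    Set.eq_univ_of_forall fun _ => ⟨finZeroElim, finZeroElim⟩
  simp only [orderedSimplexIntegral, this, Measure.restrict_univ, List.ofFn_zero, List.prod_nil,
    integral_const]
  simp [measureReal_def, volume_pi]

theorem orderedSimplexIntegral_succ [IsScalarTower ℝ M M] [SMulCommClass ℝ M M] {f : ℝ → M}
    (hf : Continuous f) (m : ℕ) {T : ℝ} (hT : 0 ≤ T) :
    orderedSimplexIntegral f (m + 1) T = ∫ s in 0..T, f s * orderedSimplexIntegral f m s := by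
  rw [orderedSimplexIntegral, setIntegral_orderedSimplex_succ
    ((continuous_prod_ofFn hf _).continuousOn.integrableOn_compact (isCompact_orderedSimplex _ _)),
    intervalIntegral.integral_of_le hT, integral_Icc_eq_integral_Ioc]
  congr 1 with s
  simp only [List.ofFn_succ, Fin.cons_zero, Fin.cons_succ, List.prod_cons]
  exact integral_const_mul_of_integrable
    ((continuous_prod_ofFn hf _).continuousOn.integrableOn_compact (isCompact_orderedSimplex _ _))

end OrderedSimplexIntegral

theorem Module.End.eq_sum_pow_apply_add_pow_apply {R X : Type*} [Semiring R] [AddCommMonoid X]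
    [Module R X] {L : Module.End R X} {g u : X} (hu : u = g + L u) (k : ℕ) :
    u = ∑ m ∈ Finset.range k, (L ^ m) g + (L ^ k) u := by
  induction k with
  | zero => simp
  | succ k ih =>
    rw [Finset.sum_range_succ, add_assoc, pow_succ, Module.End.mul_apply, ← map_add, ← hu]
    exact ih

theorem integral_pow_div_factorial (k : ℕ) (t : ℝ) :
    ∫ s in (0 : ℝ)..t, s ^ k / k.factorial = t ^ (k + 1) / (k + 1).factorial := by
  rw [intervalIntegral.integral_div, integral_pow, Nat.factorial_succ]
  push_cast
  field_simp
  ring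

section VolterraOperator

variable {M : Type*} [NormedRing M] [NormedAlgebra ℂ M]

noncomputable def volterraOperator (V : C(ℝ, M)) : C(ℝ, M) →ₗ[ℂ] C(ℝ, M) where
  toFun f := ⟨fun t => ∫ s in (0 : ℝ)..t, V s * f s,
    intervalIntegral.continuous_primitive (fun _ _ => (V * f).continuous.intervalIntegrable _ _) 0⟩
  map_add' f g := by
    ext t
    simp only [ContinuousMap.coe_mk, ContinuousMap.add_apply, mul_add]
    exact intervalIntegral.integral_add ((V * f).continuous.intervalIntegrable _ _)
      ((V * g).continuous.intervalIntegrable _ _)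
  map_smul' c f := by
    ext t
    simp only [ContinuousMap.coe_mk, ContinuousMap.smul_apply, mul_smul_comm,
      intervalIntegral.integral_smul, RingHom.id_apply]

theorem volterraOperator_apply (V f : C(ℝ, M)) (t : ℝ) :
    volterraOperator V f t = ∫ s in (0 : ℝ)..t, V s * f s :=
  rfl

theorem norm_volterraOperator_pow_apply_le {V f : C(ℝ, M)} {b C t : ℝ}
    (hV : ∀ s ∈ Set.Icc 0 t, ‖V s‖ ≤ b) (hf : ∀ s ∈ Set.Icc 0 t, ‖f s‖ ≤ C) (k : ℕ) :
    ∀ s ∈ Set.Icc 0 t, ‖(volterraOperator V ^ k) f s‖ ≤ C * (b * s) ^ k / k.factorial := by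
  induction k with
  | zero => simpa using hf
  | succ k ih =>
    intro s hs
    have hsub : ∀ r ∈ Set.Icc 0 s, r ∈ Set.Icc 0 t := fun r hr => ⟨hr.1, hr.2.trans hs.2⟩
    have hb : 0 ≤ b := (norm_nonneg _).trans (hV s hs)
    rw [pow_succ', Module.End.mul_apply, volterraOperator_apply]
    calc ‖∫ r in (0 : ℝ)..s, V r * (volterraOperator V ^ k) f r‖
        ≤ ∫ r in (0 : ℝ)..s, C * b ^ (k + 1) * (r ^ k / k.factorial) := by
          have hcont : Continuous fun r : ℝ => C * b ^ (k + 1) * (r ^ k / k.factorial) := by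
            fun_prop
          refine intervalIntegral.norm_integral_le_of_norm_le hs.1 (.of_forall fun r hr => ?_)
            (hcont.intervalIntegrable _ _)
          calc ‖V r * (volterraOperator V ^ k) f r‖
              ≤ b * (C * (b * r) ^ k / k.factorial) :=
                (norm_mul_le _ _).trans (mul_le_mul (hV r (hsub r (Set.Ioc_subset_Icc_self hr)))
                  (ih r (hsub r (Set.Ioc_subset_Icc_self hr))) (norm_nonneg _) hb)
            _ = C * b ^ (k + 1) * (r ^ k / k.factorial) := by ring
      _ = C * (b * s) ^ (k + 1) / (k + 1).factorial := by
          rw [intervalIntegral.integral_const_mul, integral_pow_div_factorial]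
          ring

theorem hasSum_volterraOperator_pow_apply {V g u : C(ℝ, M)} {c : ℂ}
    (hu : u = g + c • volterraOperator V u) {T : ℝ} (hT : 0 ≤ T) :
    HasSum (fun m => c ^ m • (volterraOperator V ^ m) g T) (u T) := by
  have hIcc : IsCompact (Set.Icc 0 T) := isCompact_Icc
  obtain ⟨b, hV⟩ := hIcc.exists_bound_of_continuousOn V.continuous.continuousOn
  obtain ⟨Cg, hg⟩ := hIcc.exists_bound_of_continuousOn g.continuous.continuousOn
  obtain ⟨Cu, hu'⟩ := hIcc.exists_bound_of_continuousOn u.continuous.continuousOn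
  have hT' : T ∈ Set.Icc 0 T := ⟨hT, le_rfl⟩
  have hterm : ∀ {f : C(ℝ, M)} {C : ℝ}, (∀ s ∈ Set.Icc 0 T, ‖f s‖ ≤ C) → ∀ m : ℕ,
      ‖c ^ m • (volterraOperator V ^ m) f T‖ ≤ C * (‖c‖ * b * T) ^ m / m.factorial := by
    intro f C hf m
    calc ‖c ^ m • (volterraOperator V ^ m) f T‖
        ≤ ‖c‖ ^ m * (C * (b * T) ^ m / m.factorial) := by
          rw [norm_smul, norm_pow]
          exact mul_le_mul_of_nonneg_left (norm_volterraOperator_pow_apply_le hV hf m T hT')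
            (by positivity)
      _ = C * (‖c‖ * b * T) ^ m / m.factorial := by ring
  have hsum : Summable fun m => ‖c ^ m • (volterraOperator V ^ m) g T‖ :=
    .of_nonneg_of_le (fun _ => norm_nonneg _) (hterm hg)
      (by simpa [mul_div_assoc] using (Real.summable_pow_div_factorial (‖c‖ * b * T)).mul_left Cg)
  have hrem : Filter.Tendsto (fun k => c ^ k • (volterraOperator V ^ k) u T) Filter.atTop
      (nhds 0) :=
    squeeze_zero_norm (hterm hu') (by simpa [mul_div_assoc] using
      (FloorSemiring.tendsto_pow_div_factorial_atTop (‖c‖ * b * T)).const_mul Cu)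
  refine (hasSum_iff_tendsto_nat_of_summable_norm hsum).2 ?_
  have hpartial : ∀ k, ∑ m ∈ Finset.range k, c ^ m • (volterraOperator V ^ m) g T =
      u T - c ^ k • (volterraOperator V ^ k) u T := by
    intro k
    have := congrArg (· T)
      (Module.End.eq_sum_pow_apply_add_pow_apply (L := c • volterraOperator V) hu k)
    simp only [smul_pow, ContinuousMap.add_apply, ContinuousMap.coe_sum, Finset.sum_apply,
      LinearMap.smul_apply, ContinuousMap.smul_apply] at this
    exact eq_sub_of_add_eq this.symm
  simpa [hpartial] using (tendsto_const_nhds (x := u T)).sub hrem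

end VolterraOperator

theorem orderedSimplexIntegral_eq_volterraOperator_pow_apply {M : Type*} [NormedRing M]
    [NormedAlgebra ℂ M] [CompleteSpace M] (V : C(ℝ, M)) (m : ℕ) {T : ℝ} (hT : 0 ≤ T) :
    orderedSimplexIntegral V m T = (volterraOperator V ^ m) 1 T := by
  induction m generalizing T with
  | zero => simp [orderedSimplexIntegral_zero]
  | succ m ih =>
    rw [orderedSimplexIntegral_succ V.continuous m hT, pow_succ', Module.End.mul_apply,
      volterraOperator_apply]
    refine intervalIntegral.integral_congr fun s hs => ?_
    rw [Set.uIcc_of_le hT] at hs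
    simp only [ih hs.1]

section InteractionPicture

open NormedSpace

variable {n : ℕ}

@[fun_prop]
theorem continuous_interactionPicture (A B : Matrix (Fin n) (Fin n) ℂ) :
    Continuous (interactionPicture A B) := by
  let +nondep : NormedAlgebra ℚ (Matrix (Fin n) (Fin n) ℂ) := .restrictScalars ℚ ℂ _
  unfold interactionPicture
  fun_prop

theorem Matrix.IsHermitian.exp_smul_mem_unitary {A : Matrix (Fin n) (Fin n) ℂ}
    (hA : A.IsHermitian) {z : ℂ} (hz : z ∈ skewAdjoint ℂ) :
    NormedSpace.exp (z • A) ∈ unitary (Matrix (Fin n) (Fin n) ℂ) :=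
  let +nondep : NormedAlgebra ℚ (Matrix (Fin n) (Fin n) ℂ) := .restrictScalars ℚ ℂ _
  exp_mem_unitary_of_mem_skewAdjoint (hA.isSelfAdjoint.smul_mem_skewAdjoint hz)

theorem Complex.I_mul_ofReal_mem_skewAdjoint (t : ℝ) : Complex.I * t ∈ skewAdjoint ℂ := by
  simp [skewAdjoint.mem_iff, Complex.conj_ofReal]

theorem norm_interactionPicture {A : Matrix (Fin n) (Fin n) ℂ} (hA : A.IsHermitian)
    (B : Matrix (Fin n) (Fin n) ℂ) (t : ℝ) : ‖interactionPicture A B t‖ = ‖B‖ := by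
  have hskew := Complex.I_mul_ofReal_mem_skewAdjoint t
  rw [interactionPicture,
    CStarRing.norm_mul_mem_unitary _ (hA.exp_smul_mem_unitary (neg_mem hskew)),
    CStarRing.norm_mem_unitary_mul _ (hA.exp_smul_mem_unitary hskew)]

end InteractionPicture

open NormedSpace in
theorem hasDerivAt_exp_smul_mul_exp_smul {𝔸 : Type*} [NormedRing 𝔸] [NormedAlgebra ℝ 𝔸]
    [CompleteSpace 𝔸] (X Y : 𝔸) (t : ℝ) :
    HasDerivAt (fun u : ℝ => exp (u • X) * exp (u • Y)) (exp (t • X) * (X + Y) * exp (t • Y)) t :=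
  ((hasDerivAt_exp_smul_const X t).mul (hasDerivAt_exp_smul_const' Y t)).congr_deriv
    (by noncomm_ring)

section Propagator

open NormedSpace Complex

variable {n : ℕ} (A B : Matrix (Fin n) (Fin n) ℂ)

noncomputable def interactionPropagator (t : ℝ) : Matrix (Fin n) (Fin n) ℂ :=
  exp ((I * t) • A) * exp ((-(I * t)) • (A + B))

@[fun_prop]
theorem continuous_interactionPropagator : Continuous (interactionPropagator A B) := by
  let +nondep : NormedAlgebra ℚ (Matrix (Fin n) (Fin n) ℂ) := .restrictScalars ℚ ℂ _
  unfold interactionPropagator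
  fun_prop

theorem hasDerivAt_interactionPropagator (t : ℝ) :
    HasDerivAt (interactionPropagator A B)
      ((-I) • (interactionPicture A B t * interactionPropagator A B t)) t := by
  let +nondep : NormedAlgebra ℚ (Matrix (Fin n) (Fin n) ℂ) := .restrictScalars ℚ ℂ _
  have hsmul : ∀ (z : ℂ) (X : Matrix (Fin n) (Fin n) ℂ) (u : ℝ), (z * u) • X = u • z • X :=
    fun z X u => by rw [mul_comm, mul_smul, RCLike.real_smul_eq_coe_smul (K := ℂ)]; rfl
  have hU : interactionPropagator A B =
      fun u : ℝ => exp (u • I • A) * exp (u • (-I) • (A + B)) := by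
    funext u
    rw [interactionPropagator, ← hsmul, ← hsmul, neg_mul]
  have hinv : exp (-(t • I • A)) * exp (t • I • A) = 1 := by
    rw [← NormedSpace.exp_add_of_commute (Commute.refl _).neg_left, neg_add_cancel,
      NormedSpace.exp_zero]
  have hXY : I • A + (-I) • (A + B) = (-I) • B := by
    rw [smul_add, neg_smul, neg_smul]
    abel
  rw [hU]
  refine (hasDerivAt_exp_smul_mul_exp_smul (I • A) ((-I) • (A + B)) t).congr_deriv ?_
  show exp (t • I • A) * (I • A + (-I) • (A + B)) * exp (t • (-I) • (A + B)) =
    (-I) • (exp ((I * t) • A) * B * exp ((-(I * t)) • A) *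
      (exp (t • I • A) * exp (t • (-I) • (A + B))))
  rw [hXY, neg_smul (I * (t : ℂ)) A, hsmul, mul_assoc (_ * B), ← mul_assoc (NormedSpace.exp _),
    hinv, one_mul, mul_smul_comm, smul_mul_assoc]

theorem interactionPropagator_eq_one_add_integral (t : ℝ) :
    interactionPropagator A B t =
      1 + (-I) • ∫ s in (0 : ℝ)..t, interactionPicture A B s * interactionPropagator A B s := by
  have hint : Continuous fun s =>
      (-I) • (interactionPicture A B s * interactionPropagator A B s) := by
    fun_prop
  rw [← intervalIntegral.integral_smul, intervalIntegral.integral_eq_sub_of_hasDerivAt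
    (fun s _ => hasDerivAt_interactionPropagator A B s) (hint.intervalIntegrable 0 t)]
  simp [interactionPropagator]

end Propagator

theorem stmt7_general (n : ℕ) (A B : Matrix (Fin n) (Fin n) ℂ)
    (hA : A.IsHermitian) (T : ℝ) (hT : 0 ≤ T) :
    (∀ m : ℕ, ‖dysonTerm A B T m‖ ≤ (‖B‖ * T) ^ m / m.factorial)
    ∧ Summable (fun m : ℕ => ‖(-Complex.I) ^ m • dysonTerm A B T m‖)
    ∧ NormedSpace.exp ((Complex.I * (T : ℂ)) • A) *
          NormedSpace.exp ((-(Complex.I * (T : ℂ))) • (A + B))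
        = ∑' m : ℕ, (-Complex.I) ^ m • dysonTerm A B T m := by
  let V : C(ℝ, Matrix (Fin n) (Fin n) ℂ) := ⟨_, continuous_interactionPicture A B⟩
  let U : C(ℝ, Matrix (Fin n) (Fin n) ℂ) := ⟨_, continuous_interactionPropagator A B⟩
  have hD (m : ℕ) : dysonTerm A B T m = (volterraOperator V ^ m) 1 T :=
    orderedSimplexIntegral_eq_volterraOperator_pow_apply V m hT
  have hbound (m : ℕ) : ‖dysonTerm A B T m‖ ≤ (‖B‖ * T) ^ m / m.factorial := by
    have h1 : ‖(1 : Matrix (Fin n) (Fin n) ℂ)‖ ≤ 1 := by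
      nontriviality Matrix (Fin n) (Fin n) ℂ
      exact CStarRing.norm_one.le
    simpa [hD] using norm_volterraOperator_pow_apply_le (V := V) (f := 1) (C := 1)
      (fun s _ => (norm_interactionPicture hA B s).le) (fun _ _ => h1) m T ⟨hT, le_rfl⟩
  have hnorm (m : ℕ) : ‖(-Complex.I) ^ m • dysonTerm A B T m‖ = ‖dysonTerm A B T m‖ := by
    simp [norm_smul]
  have hU : U = 1 + (-Complex.I) • volterraOperator V U := by
    ext1 t
    exact interactionPropagator_eq_one_add_integral A B t
  refine ⟨hbound, .of_nonneg_of_le (fun _ => norm_nonneg _)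
    (fun m => (hnorm m).trans_le (hbound m)) (Real.summable_pow_div_factorial _), ?_⟩
  simp only [hD]
  exact (hasSum_volterraOperator_pow_apply hU hT).tsum_eq.symm

theorem stmt7 (n : ℕ) (A B : Matrix (Fin n) (Fin n) ℂ)
    (hA : A.IsHermitian) (hB : B.IsHermitian) (T : ℝ) (hT : 0 ≤ T) :
    (∀ m : ℕ, ‖dysonTerm A B T m‖ ≤ (‖B‖ * T) ^ m / m.factorial)
    ∧ Summable (fun m : ℕ => ‖(-Complex.I) ^ m • dysonTerm A B T m‖)
    ∧ NormedSpace.exp ((Complex.I * (T : ℂ)) • A) *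
          NormedSpace.exp ((-(Complex.I * (T : ℂ))) • (A + B))
        = ∑' m : ℕ, (-Complex.I) ^ m • dysonTerm A B T m :=
  stmt7_general n A B hA T hT
end
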